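/- Let A be an algebra with a term t Mal'cev modulo F and G. Then for every n ≥ 0 and every reflexive admissible relation R on A: R^{n+1} ⊆ (F(R))^n ∘ R ∘ (G(R))^n, where T^n denotes the n-fold relational composition of T with itself and T^0 is the identity relation. -/

import Mathlib

structure Signature where
  symbols : Type
  arity : symbols → ℕ

structure UAAlgebra (σ : Signature) where
  carrier : Type
  ops : ∀ s, (Fin (σ.arity s) → carrier) → carrier

namespace Paper

variable {σ : Signature}

/-- Binary relations on the carrier of an algebra. -/
abbrev Rel (A : UAAlgebra σ) := A.carrier → A.carrier → Prop

/-- A relation is admissible (compatible) if it is preserved by all operations,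
i.e. it is a subalgebra of `A × A`. -/
def Compatible (A : UAAlgebra σ) (R : Rel A) : Prop :=
  ∀ s (f g : Fin (σ.arity s) → A.carrier),
    (∀ j, R (f j) (g j)) → R (A.ops s f) (A.ops s g)

/-- Reflexive and admissible. -/
def RAdm (A : UAAlgebra σ) (R : Rel A) : Prop :=
  Reflexive R ∧ Compatible A R

/-- Relational composition. -/
def comp {A : UAAlgebra σ} (R S : Rel A) : Rel A :=
  fun a c => ∃ b, R a b ∧ S b c

/-- `cl A X` : the least compatible relation containing `X`. -/
def cl (A : UAAlgebra σ) (X : Rel A) : Rel A :=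
  fun a b => ∀ S : Rel A, Compatible A S → (∀ x y, X x y → S x y) → S a b

/-- The least reflexive compatible relation containing `X`. -/
def clRefl (A : UAAlgebra σ) (X : Rel A) : Rel A :=
  fun a b => ∀ S : Rel A, Reflexive S → Compatible A S → (∀ x y, X x y → S x y) → S a b

/-- `altComp R S n` is `R ∘ₙ S`, the alternating composition
`R ∘ S ∘ R ∘ ⋯` with `n` factors (`n - 1` occurrences of `∘`);
by convention `R ∘₀ S` is the identity relation. -/
def altComp {A : UAAlgebra σ} (R S : Rel A) : ℕ → Rel A
  | 0 => Eq
  | n + 1 => comp R (altComp S R n)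

/-- `relPow R n = Rⁿ`, with `R⁰` the identity relation. -/
def relPow {A : UAAlgebra σ} (R : Rel A) : ℕ → Rel A
  | 0 => Eq
  | n + 1 => comp R (relPow R n)

/-- The join `R + S = ⋃ₙ R ∘ₙ S`. -/
def join {A : UAAlgebra σ} (R S : Rel A) : Rel A :=
  fun a b => ∃ n, altComp R S n a b

/-- Converse relation `R⁻`. -/
def conv {A : UAAlgebra σ} (R : Rel A) : Rel A :=
  fun a b => R b a

/-- Composition of a finite list of relations (empty list gives the identity). -/
def compList {A : UAAlgebra σ} : List (Rel A) → Rel A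
  | [] => Eq
  | r :: l => comp r (compList l)

/-- Join of a family of relations: the union of all finite compositions of members. -/
def joinFam {A : UAAlgebra σ} {ι : Type} (R : ι → Rel A) : Rel A :=
  fun a b => ∃ l : List ι, compList (l.map R) a b

/-- The smallest congruence containing `X`. -/
def cg (A : UAAlgebra σ) (X : Rel A) : Rel A :=
  fun a b => ∀ S : Rel A, Equivalence S → Compatible A S →
    (∀ x y, X x y → S x y) → S a b

/-- Terms of the signature `σ` in `n` variables. -/
inductive Term (σ : Signature) (n : ℕ) : Type
  | var : Fin n → Term σ n
  | op : ∀ s, (Fin (σ.arity s) → Term σ n) → Term σ n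

/-- Evaluation of a term in an algebra under an environment. -/
def Term.eval {n : ℕ} (A : UAAlgebra σ) (env : Fin n → A.carrier) : Term σ n → A.carrier
  | .var k => env k
  | .op s args => A.ops s fun j => (args j).eval A env

/-- The ternary term operation induced by a ternary term. -/
def tApp (A : UAAlgebra σ) (t : Term σ 3) (a b c : A.carrier) : A.carrier :=
  t.eval A ![a, b, c]

/-- `t` is Mal'cev modulo `F` and `G`: whenever `a R b` with `R` reflexive admissible,
`a F(R) t(a,b,b)` and `t(a,a,b) G(R) b`. -/
def MalcevMod (A : UAAlgebra σ) (F G : Rel A → Rel A) (t : Term σ 3) : Prop :=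
  ∀ R : Rel A, RAdm A R → ∀ a b : A.carrier, R a b →
    F R a (tApp A t a b b) ∧ G R (tApp A t a a b) b

end Paper

/-! A chain `a = x₀ R x₁ R ⋯ R x_{m+2} = c` is traded for
`a F(R) t(x₀,x₁,x₁) R t(x₁,x₂,x₂) R ⋯ R t(x_m,x_{m+1},x_{m+1}) R t(x_{m+1},x_{m+1},c) G(R) c`,
which is one `R`-step shorter; doing this `n` times to `Rⁿ⁺¹` leaves a single `R`-step. -/

namespace Paper

variable {σ : Signature} {A : UAAlgebra σ}

theorem Compatible.eval {R : Rel A} (hR : Compatible A R) {n : ℕ} (u : Term σ n)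
    {f g : Fin n → A.carrier} (hfg : ∀ j, R (f j) (g j)) : R (u.eval A f) (u.eval A g) := by
  induction u with
  | var k => exact hfg k
  | op s args ih => exact hR s _ _ ih

theorem Compatible.tApp {R : Rel A} (hR : Compatible A R) (t : Term σ 3)
    {a b c a' b' c' : A.carrier} (ha : R a a') (hb : R b b') (hc : R c c') :
    R (tApp A t a b c) (tApp A t a' b' c') :=
  hR.eval t fun j => by fin_cases j <;> assumption

theorem relPow_succ_of_relPow_of_rel {T : Rel A} :
    ∀ {n : ℕ} {a b c : A.carrier}, relPow T n a b → T b c → relPow T (n + 1) a c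
  | 0, _, _, _, rfl, hbc => ⟨_, hbc, rfl⟩
  | _ + 1, _, _, _, ⟨x, hax, hxb⟩, hbc => ⟨x, hax, relPow_succ_of_relPow_of_rel hxb hbc⟩

namespace MalcevMod

variable {F G : Rel A → Rel A} {t : Term σ 3} {R : Rel A}

theorem comp_relPow_of_rel_of_relPow (ht : MalcevMod A F G t) (hR : RAdm A R) :
    ∀ {m : ℕ} {a b c : A.carrier}, R a b → relPow R (m + 1) b c →
      comp (relPow R (m + 1)) (G R) (tApp A t a b b) c
  | 0, _, b, _, hab, ⟨c, hbc, rfl⟩ =>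
    ⟨tApp A t b b c, ⟨_, hR.2.tApp t hab (hR.1 b) hbc, rfl⟩, (ht R hR b c hbc).2⟩
  | _ + 1, _, b, _, hab, ⟨d, hbd, hdc⟩ =>
    have ⟨y, hy, hyc⟩ := comp_relPow_of_rel_of_relPow ht hR hbd hdc
    ⟨y, ⟨tApp A t b d d, hR.2.tApp t hab hbd hbd, hy⟩, hyc⟩

theorem relPow_add_two_le (ht : MalcevMod A F G t) (hR : RAdm A R) (m : ℕ) :
    relPow R (m + 2) ≤ comp (F R) (comp (relPow R (m + 1)) (G R)) := by
  rintro a c ⟨b, hab, hbc⟩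
  exact ⟨tApp A t a b b, (ht R hR a b hab).1, ht.comp_relPow_of_rel_of_relPow hR hab hbc⟩

theorem relPow_add_add_one_le (ht : MalcevMod A F G t) (hR : RAdm A R) (k : ℕ) :
    ∀ m, relPow R (k + m + 1) ≤
      comp (relPow (F R) k) (comp (relPow R (m + 1)) (relPow (G R) k)) := by
  induction k with
  | zero =>
    intro m a c h
    rw [Nat.zero_add] at h
    exact ⟨a, rfl, c, h, rfl⟩
  | succ k ih =>
    intro m a c h
    rw [Nat.add_right_comm k 1 m] at h
    obtain ⟨x, hax, y, hxy, hyc⟩ := ih (m + 1) a c h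
    obtain ⟨u, hxu, v, huv, hvy⟩ := ht.relPow_add_two_le hR m x y hxy
    exact ⟨u, relPow_succ_of_relPow_of_rel hax hxu, v, huv, y, hvy, hyc⟩

end MalcevMod

end Paper

open Paper

theorem stmt6_general {σ : Signature} (A : UAAlgebra σ) (F G : Rel A → Rel A)
    (t : Term σ 3) (ht : MalcevMod A F G t)
    (n : ℕ) (R : Rel A) (hR : RAdm A R) :
    ∀ a c, relPow R (n + 1) a c →
      comp (relPow (F R) n) (comp R (relPow (G R) n)) a c := by
  intro a c h
  obtain ⟨x, hax, _, ⟨y, hxy, rfl⟩, hyc⟩ := ht.relPow_add_add_one_le hR n 0 a c h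
  exact ⟨x, hax, y, hxy, hyc⟩

/-- Theorem 1(vii): `R^{n+1} ⊆ (F(R))ⁿ ∘ R ∘ (G(R))ⁿ` for every `n ≥ 0`. -/
theorem stmt6 {σ : Signature} (A : UAAlgebra σ) (F G : Rel A → Rel A)
    (hF : ∀ R, RAdm A R → RAdm A (F R)) (hG : ∀ R, RAdm A R → RAdm A (G R))
    (t : Term σ 3) (ht : MalcevMod A F G t)
    (n : ℕ) (R : Rel A) (hR : RAdm A R) :
    ∀ a c, relPow R (n + 1) a c →
      comp (relPow (F R) n) (comp R (relPow (G R) n)) a c :=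
  stmt6_general A F G t ht n R hR
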